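/- arXiv:2408.10856 — 4 statements merged into one kernel-verified Lean document; each statement's English description precedes it below -/
import Mathlib

section
/- The reciprocal map is uniformly Hadamard differentiable: fix ε > 0 and let D_φ := {A : [a,b] → ℝ bounded : |A(x)| ≥ ε for all x}, with φ(A) := 1/A (pointwise), viewed as a map into the bounded functions with sup-norm. Then for all sequences tₙ → 0, Aₙ → A in sup-norm with Aₙ, Aₙ + tₙ αₙ ∈ D_φ, and αₙ → α in sup-norm, one has tₙ⁻¹(1/(Aₙ + tₙ αₙ) − 1/Aₙ) → −α/A² uniformly on [a,b]. -/
/-!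
Since `tₙ ≠ 0`, the difference quotient is exactly `-αₙ · (Aₙ + tₙαₙ)⁻¹ · Aₙ⁻¹`. Because `αₙ`
is eventually uniformly bounded, `tₙαₙ → 0` and hence `Aₙ + tₙαₙ → A` uniformly. Uniform
convergence passes to inverses of functions bounded away from zero (with `‖f⁻¹‖ ≤ ε⁻¹`) and to
products of functions with bounded limits, which gives the limit `-α · A⁻¹ · A⁻¹`.
-/

open Filter Topology

section UniformConvergence

variable {ι α : Type*} {p : Filter ι} {s : Set α}

theorem tendstoUniformlyOn_iff_tendsto_sub {G : Type*} [UniformSpace G] [AddGroup G]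
    [IsUniformAddGroup G] {F : ι → α → G} {f : α → G} :
    TendstoUniformlyOn F f p s ↔
      Tendsto (fun q : ι × α => F q.1 q.2 - f q.2) (p ×ˢ 𝓟 s) (𝓝 0) := by
  rw [tendstoUniformlyOn_iff_tendsto, uniformity_eq_comap_nhds_zero G, tendsto_comap_iff]
  rfl

theorem isBoundedUnder_prod_principal_of_forall_le {u : ι × α → ℝ} {C : ℝ}
    (hu : ∀ n, ∀ x ∈ s, u (n, x) ≤ C) : IsBoundedUnder (· ≤ ·) (p ×ˢ 𝓟 s) u :=
  isBoundedUnder_of_eventually_le <| eventually_prod_principal_iff.2 <| .of_forall hu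

theorem TendstoUniformlyOn.isBoundedUnder_norm {E : Type*} [SeminormedAddCommGroup E]
    {f : ι → α → E} {F : α → E} {C : ℝ} (hf : TendstoUniformlyOn f F p s)
    (hF : ∀ x ∈ s, ‖F x‖ ≤ C) :
    IsBoundedUnder (· ≤ ·) (p ×ˢ 𝓟 s) fun q : ι × α => ‖f q.1 q.2‖ := by
  have hdiff := (tendstoUniformlyOn_iff_tendsto_sub.1 hf).norm.isBoundedUnder_le
  have hF_bdd : IsBoundedUnder (· ≤ ·) (p ×ˢ 𝓟 s) fun q : ι × α => ‖F q.2‖ :=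
    isBoundedUnder_prod_principal_of_forall_le fun _ x hx => hF x hx
  refine (isBoundedUnder_le_add hdiff hF_bdd).mono_le ?_
  exact .of_forall fun q => norm_le_norm_sub_add (f q.1 q.2) (F q.2)

theorem TendstoUniformlyOn.mul_of_le {R : Type*} [NonUnitalSeminormedRing R]
    {f g : ι → α → R} {F G : α → R} {C D : ℝ}
    (hf : TendstoUniformlyOn f F p s) (hg : TendstoUniformlyOn g G p s)
    (hF : ∀ x ∈ s, ‖F x‖ ≤ C) (hG : ∀ x ∈ s, ‖G x‖ ≤ D) :
    TendstoUniformlyOn (fun n x => f n x * g n x) (fun x => F x * G x) p s := by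
  have hg_bdd := hg.isBoundedUnder_norm hG
  rw [tendstoUniformlyOn_iff_tendsto_sub] at hf hg ⊢
  have hF_bdd : IsBoundedUnder (· ≤ ·) (p ×ˢ 𝓟 s) fun q : ι × α => ‖F q.2‖ :=
    isBoundedUnder_prod_principal_of_forall_le fun _ x hx => hF x hx
  have := (hf.zero_mul_isBoundedUnder_le hg_bdd).add
    (isBoundedUnder_le_mul_tendsto_zero hF_bdd hg)
  simpa only [sub_mul, mul_sub, sub_add_sub_cancel, add_zero] using this

theorem norm_inv_le_inv_of_le_norm {𝕜 : Type*} [NormedDivisionRing 𝕜] {z : 𝕜} {ε : ℝ}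
    (hε : 0 < ε) (hz : ε ≤ ‖z‖) : ‖z⁻¹‖ ≤ ε⁻¹ := by
  rw [norm_inv]
  exact inv_anti₀ hε hz

theorem TendstoUniformlyOn.inv_of_le_norm {𝕜 : Type*} [NormedDivisionRing 𝕜]
    {f : ι → α → 𝕜} {F : α → 𝕜} {ε : ℝ} (hf : TendstoUniformlyOn f F p s) (hε : 0 < ε)
    (hfε : ∀ n, ∀ x ∈ s, ε ≤ ‖f n x‖) (hFε : ∀ x ∈ s, ε ≤ ‖F x‖) :
    TendstoUniformlyOn (fun n x => (f n x)⁻¹) (fun x => (F x)⁻¹) p s := by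
  rw [tendstoUniformlyOn_iff_tendsto_sub] at hf ⊢
  have hf_inv : IsBoundedUnder (· ≤ ·) (p ×ˢ 𝓟 s) fun q : ι × α => ‖(f q.1 q.2)⁻¹‖ :=
    isBoundedUnder_prod_principal_of_forall_le fun n x hx =>
      norm_inv_le_inv_of_le_norm hε (hfε n x hx)
  have hF_inv : IsBoundedUnder (· ≤ ·) (p ×ˢ 𝓟 s) fun q : ι × α => ‖(F q.2)⁻¹‖ :=
    isBoundedUnder_prod_principal_of_forall_le fun _ x hx =>
      norm_inv_le_inv_of_le_norm hε (hFε x hx)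
  have := (isBoundedUnder_le_mul_tendsto_zero hf_inv (hf.zero_mul_isBoundedUnder_le hF_inv)).neg
  rw [neg_zero] at this
  refine this.congr' (eventually_prod_principal_iff.2 (.of_forall fun n x hx => ?_))
  have hf0 : f n x ≠ 0 := norm_pos_iff.1 (hε.trans_le (hfε n x hx))
  have hF0 : F x ≠ 0 := norm_pos_iff.1 (hε.trans_le (hFε x hx))
  change _ = (f n x)⁻¹ - (F x)⁻¹
  rw [inv_sub_inv' hf0 hF0, ← neg_sub, neg_mul, mul_neg, neg_neg, mul_assoc]

end UniformConvergence

theorem inv_mul_inv_add_mul_sub_inv {K : Type*} [Field K] {t u v : K} (ht : t ≠ 0)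
    (hu : u ≠ 0) (huv : u + t * v ≠ 0) :
    t⁻¹ * ((u + t * v)⁻¹ - u⁻¹) = -(v * ((u + t * v)⁻¹ * u⁻¹)) := by
  field_simp
  ring

theorem reciprocal_uniformHadamard_general
    (a b ε : ℝ) (hε : 0 < ε)
    (A : ℝ → ℝ) (Aseq : ℕ → ℝ → ℝ) (α : ℝ → ℝ) (αseq : ℕ → ℝ → ℝ) (t : ℕ → ℝ)
    -- A is in the domain and bounded, α is bounded
    (hA : ∀ x ∈ Set.Icc a b, ε ≤ |A x|)
    (hαbdd : ∃ C, ∀ x ∈ Set.Icc a b, |α x| ≤ C)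
    -- tₙ → 0, tₙ ≠ 0
    (ht : Tendsto t atTop (𝓝 0)) (ht0 : ∀ n, t n ≠ 0)
    -- Aₙ → A and αₙ → α in sup-norm on [a,b]
    (hAconv : TendstoUniformlyOn Aseq A atTop (Set.Icc a b))
    (hαconv : TendstoUniformlyOn αseq α atTop (Set.Icc a b))
    -- Aₙ and Aₙ + tₙ αₙ lie in the domain D_φ
    (hAn : ∀ n, ∀ x ∈ Set.Icc a b, ε ≤ |Aseq n x|)
    (hAn' : ∀ n, ∀ x ∈ Set.Icc a b, ε ≤ |Aseq n x + t n * αseq n x|) :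
    TendstoUniformlyOn
      (fun n x => (t n)⁻¹ * ((Aseq n x + t n * αseq n x)⁻¹ - (Aseq n x)⁻¹))
      (fun x => -(α x) / (A x) ^ 2) atTop (Set.Icc a b) := by
  obtain ⟨C, hC⟩ := hαbdd
  have hA_inv (x) (hx : x ∈ Set.Icc a b) : ‖(A x)⁻¹‖ ≤ ε⁻¹ :=
    norm_inv_le_inv_of_le_norm hε (hA x hx)
  have hB : TendstoUniformlyOn (fun n x => Aseq n x + t n * αseq n x) A atTop (Set.Icc a b) := by
    simpa only [zero_mul, Pi.add_def, add_zero] using hAconv.add <|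
      (ht.tendstoUniformlyOn_const _).mul_of_le hαconv (C := 0) (fun _ _ => norm_zero.le) hC
  have hinv := (hB.inv_of_le_norm hε hAn' hA).mul_of_le (hAconv.inv_of_le_norm hε hAn hA)
    hA_inv hA_inv
  have hlim := (hαconv.mul_of_le hinv hC fun x hx =>
    (norm_mul_le _ _).trans (mul_le_mul (hA_inv x hx) (hA_inv x hx) (norm_nonneg _)
      (inv_nonneg.2 hε.le))).neg
  refine (hlim.congr (.of_forall fun n x hx => ?_)).congr_right fun x _ => ?_
  · have hAn0 : Aseq n x ≠ 0 := abs_pos.1 (hε.trans_le (hAn n x hx))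
    have hB0 : Aseq n x + t n * αseq n x ≠ 0 := abs_pos.1 (hε.trans_le (hAn' n x hx))
    exact (inv_mul_inv_add_mul_sub_inv (ht0 n) hAn0 hB0).symm
  · rw [Pi.neg_apply]
    ring

/-- The reciprocal map `A ↦ 1/A` on bounded functions on `[a,b]` that are bounded away
from zero (in absolute value by ε) is uniformly Hadamard differentiable, with derivative
`α ↦ -α/A²`, uniformly on `[a,b]`. -/
theorem reciprocal_uniformHadamard
    (a b ε : ℝ) (hε : 0 < ε)
    (A : ℝ → ℝ) (Aseq : ℕ → ℝ → ℝ) (α : ℝ → ℝ) (αseq : ℕ → ℝ → ℝ) (t : ℕ → ℝ)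
    -- A is in the domain and bounded, α is bounded
    (hA : ∀ x ∈ Set.Icc a b, ε ≤ |A x|)
    (hAbdd : ∃ C, ∀ x ∈ Set.Icc a b, |A x| ≤ C)
    (hαbdd : ∃ C, ∀ x ∈ Set.Icc a b, |α x| ≤ C)
    -- tₙ → 0, tₙ ≠ 0
    (ht : Tendsto t atTop (𝓝 0)) (ht0 : ∀ n, t n ≠ 0)
    -- Aₙ → A and αₙ → α in sup-norm on [a,b]
    (hAconv : TendstoUniformlyOn Aseq A atTop (Set.Icc a b))
    (hαconv : TendstoUniformlyOn αseq α atTop (Set.Icc a b))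
    -- Aₙ and Aₙ + tₙ αₙ lie in the domain D_φ
    (hAn : ∀ n, ∀ x ∈ Set.Icc a b, ε ≤ |Aseq n x|)
    (hAn' : ∀ n, ∀ x ∈ Set.Icc a b, ε ≤ |Aseq n x + t n * αseq n x|) :
    TendstoUniformlyOn
      (fun n x => (t n)⁻¹ * ((Aseq n x + t n * αseq n x)⁻¹ - (Aseq n x)⁻¹))
      (fun x => -(α x) / (A x) ^ 2) atTop (Set.Icc a b) :=
  reciprocal_uniformHadamard_general a b ε hε A Aseq α αseq t hA hαbdd ht ht0 hAconv hαconv hAn hAn'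
end

section
/- Continuity of the product-integral derivative in the base point (jump-sum estimate): let M > 0, K > 0, and suppose A, Aₙ are càdlàg functions on [a,b] of total variation ≤ M whose jumps satisfy 1 + ΔA(u) ≥ 1/K and 1 + ΔAₙ(u) ≥ 1/K for all u, and let α, αₙ be càdlàg with ‖αₙ − α‖_∞ → 0 and ‖Aₙ − A‖_∞ → 0. Then for every ε > 0 there exists a finite-variation function α̃ with ‖α − α̃‖_∞ < ε such that limsup_n sup_{t∈(a,b]} | Σ_{u ∈ D_{Aₙ} ∩ (a,t]} ΔAₙ(u)Δαₙ(u)/(1+ΔAₙ(u)) − Σ_{u ∈ D_A ∩ (a,t]} ΔA(u)Δα(u)/(1+ΔA(u)) | ≤ K²(8 max(M², 1) + 2‖α̃‖_{BV}) ε. -/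
/-
Approximate `α` uniformly within `ε / 2` by a step function `α̃` of bounded variation; this is a
continuous-induction argument along `[a, b]` that uses right-continuity to move forward and left
limits to pass to suprema. Writing `x, y` for the jumps of `Aₙ, A`, `p, q` for those of `αₙ, α` and
`r` for those of `α̃`, each term of the difference of jump sums splits as
  `x (p - r) / (1 + x) + r (x - y) / ((1 + x) (1 + y)) + y (r - q) / (1 + y)`.
The denominators are at least `1 / K`, uniform convergence makes `|p - r|`, `|r - q|`, `|x - y|`
eventually `O(ε)`, and the absolute jumps of a function of variation `V` sum to at most `V`.
Finally `K ≥ 1`, since the summable jumps of `A` are arbitrarily small somewhere in `(a, b]`.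
-/

open Filter Topology

/-- The jump of `f` at `u`. -/
noncomputable def jump (f : ℝ → ℝ) (u : ℝ) : ℝ := f u - Function.leftLim f u

/-- `f` is càdlàg on `[a,b]`: right-continuous and with left limits. -/
def IsCadlagOn (a b : ℝ) (f : ℝ → ℝ) : Prop :=
  (∀ x ∈ Set.Ico a b, ContinuousWithinAt f (Set.Ici x) x) ∧
  (∀ x ∈ Set.Ioc a b, Tendsto f (𝓝[<] x) (𝓝 (Function.leftLim f x)))

/-- The sum `Σ_{u ∈ D_f ∩ (a,s]} Δf(u)Δα(u)/(1+Δf(u))`; the terms vanish off the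
set of discontinuities `D_f`, so it is written as a `tsum` over `(a,s]`. -/
noncomputable def jumpSum (f α : ℝ → ℝ) (a s : ℝ) : ℝ :=
  ∑' u : Set.Ioc a s, jump f u * jump α u / (1 + jump f u)

open Set Function

lemma eVariationOn_add_le {α E : Type*} [LinearOrder α] [SeminormedAddCommGroup E]
    (f g : α → E) (s : Set α) :
    eVariationOn (f + g) s ≤ eVariationOn f s + eVariationOn g s := by
  refine iSup_le fun ⟨n, u, hu, us⟩ => ?_
  calc ∑ i ∈ Finset.range n, edist ((f + g) (u (i + 1))) ((f + g) (u i))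
      ≤ ∑ i ∈ Finset.range n,
          (edist (f (u (i + 1))) (f (u i)) + edist (g (u (i + 1))) (g (u i))) :=
        Finset.sum_le_sum fun i _ => edist_add_add_le _ _ _ _
    _ = _ := Finset.sum_add_distrib
    _ ≤ _ := add_le_add (eVariationOn.sum_le (f := f) hu us) (eVariationOn.sum_le (f := g) hu us)

lemma BoundedVariationOn.add {α E : Type*} [LinearOrder α] [SeminormedAddCommGroup E]
    {f g : α → E} {s : Set α} (hf : BoundedVariationOn f s) (hg : BoundedVariationOn g s) :
    BoundedVariationOn (f + g) s :=
  ne_top_of_le_ne_top (ENNReal.add_ne_top.2 ⟨hf, hg⟩) (eVariationOn_add_le f g s)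

lemma boundedVariationOn_indicator_Ici (t c : ℝ) :
    BoundedVariationOn ((Ici t).indicator fun _ => c) univ := by
  have hmono : Monotone ((Ici t).indicator (1 : ℝ → ℝ)) := fun x y hxy => by
    by_cases hx : t ≤ x
    · simp [hx, hx.trans hxy]
    · by_cases hy : t ≤ y <;> simp [indicator_of_notMem (show x ∉ Ici t from hx), hy]
  have hbv : BoundedVariationOn ((Ici t).indicator (1 : ℝ → ℝ)) univ :=
    (hmono.monotoneOn univ).boundedVariationOn (C := 1) fun x _ => by
      by_cases hx : t ≤ x <;> simp [hx]
  have hstep : ((Ici t).indicator fun _ => c) = (c • ·) ∘ (Ici t).indicator (1 : ℝ → ℝ) := by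
    ext x
    by_cases hx : t ≤ x <;> simp [hx]
  exact hstep ▸ (lipschitzWith_smul c).comp_boundedVariationOn hbv

section StepApproximation

variable {α : ℝ → ℝ} {η a : ℝ}

-- Constancy on `[t, ∞)` lets a later step at `t` prescribe the values on `[t, c)`.
def ApproxUpTo (α : ℝ → ℝ) (η a t : ℝ) : Prop :=
  ∃ g : ℝ → ℝ, BoundedVariationOn g univ ∧ (∀ x ∈ Icc a t, |α x - g x| ≤ η) ∧
    ∀ x, t ≤ x → g x = g t

lemma approxUpTo_self (hη : 0 ≤ η) : ApproxUpTo α η a a := by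
  refine ⟨fun _ => α a, ?_, fun x hx => ?_, fun _ _ => rfl⟩
  · exact (eVariationOn.constant_on (by simp)).trans_lt ENNReal.zero_lt_top |>.ne
  · simpa [le_antisymm hx.2 hx.1] using hη

lemma ApproxUpTo.extend {t c v : ℝ} (h : ApproxUpTo α η a t) (hη : 0 ≤ η) (htc : t ≤ c)
    (hv : ∀ x ∈ Ico t c, |α x - v| ≤ η) : ApproxUpTo α η a c := by
  obtain ⟨g, hg, happrox, hconst⟩ := h
  refine ⟨g + (Ici t).indicator (fun _ => v - g t) + (Ici c).indicator (fun _ => α c - v),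
    (hg.add (boundedVariationOn_indicator_Ici _ _)).add (boundedVariationOn_indicator_Ici _ _),
    fun x hx => ?_, fun x hx => ?_⟩
  · rcases lt_or_ge x t with hxt | hxt
    · simpa [hxt, hxt.trans_le htc] using happrox x ⟨hx.1, hxt.le⟩
    rcases lt_or_ge x c with hxc | hxc
    · simpa [hxt, hxc, hconst x hxt] using hv x ⟨hxt, hxc⟩
    · obtain rfl := le_antisymm hx.2 hxc
      simpa [htc, hconst x htc] using hη
  · simp [hx, htc.trans hx, htc, hconst x (htc.trans hx), hconst c htc]

lemma approxUpTo_of_tendsto_nhdsLT {c L : ℝ} (hη : 0 < η) (hL : Tendsto α (𝓝[<] c) (𝓝 L))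
    (hS : ∀ t < c, ∃ t' ∈ Ioc t c, ApproxUpTo α η a t') : ApproxUpTo α η a c := by
  have hnear : ∀ᶠ x in 𝓝[<] c, |α x - L| ≤ η :=
    (Metric.tendsto_nhds.mp hL η hη).mono fun x hx => (Real.dist_eq _ _ ▸ hx).le
  obtain ⟨lo, hlo, hsub⟩ := mem_nhdsLT_iff_exists_Ioo_subset.mp hnear
  obtain ⟨t, ⟨hlot, htc⟩, ht⟩ := hS lo hlo
  exact ht.extend hη.le htc fun x hx => hsub ⟨hlot.trans_le hx.1, hx.2⟩

lemma ApproxUpTo.exists_gt {b c : ℝ} (h : ApproxUpTo α η a c) (hη : 0 < η) (hcb : c < b)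
    (hα : ContinuousWithinAt α (Ici c) c) : ∃ c' ∈ Ioc c b, ApproxUpTo α η a c' := by
  have hnear : ∀ᶠ x in 𝓝[≥] c, |α x - α c| ≤ η :=
    (Metric.tendsto_nhds.mp hα η hη).mono fun x hx => (Real.dist_eq _ _ ▸ hx).le
  obtain ⟨u, hcu, hsub⟩ := mem_nhdsGE_iff_exists_Ico_subset.mp hnear
  refine ⟨min b u, ⟨lt_min hcb hcu, min_le_left _ _⟩, h.extend hη.le (le_min hcb.le hcu.le)
    fun x hx => hsub ⟨hx.1, hx.2.trans_le (min_le_right _ _)⟩⟩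

lemma IsCadlagOn.exists_boundedVariationOn_abs_sub_le {b : ℝ} (hα : IsCadlagOn a b α)
    (hab : a ≤ b) (hη : 0 < η) :
    ∃ g : ℝ → ℝ, BoundedVariationOn g univ ∧ ∀ x ∈ Icc a b, |α x - g x| ≤ η := by
  set S := {t ∈ Icc a b | ApproxUpTo α η a t}
  have haS : a ∈ S := ⟨left_mem_Icc.2 hab, approxUpTo_self hη.le⟩
  have hbdd : BddAbove S := ⟨b, fun t ht => ht.1.2⟩
  have hc : sSup S ∈ Icc a b := ⟨le_csSup hbdd haS, csSup_le ⟨a, haS⟩ fun t ht => ht.1.2⟩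
  have hcS : ApproxUpTo α η a (sSup S) := by
    rcases hc.1.eq_or_lt with hac | hac
    · exact hac ▸ haS.2
    refine approxUpTo_of_tendsto_nhdsLT hη (hα.2 _ ⟨hac, hc.2⟩) fun t ht => ?_
    obtain ⟨t', ht'S, htt'⟩ := exists_lt_of_lt_csSup ⟨a, haS⟩ ht
    exact ⟨t', ⟨htt', le_csSup hbdd ht'S⟩, ht'S.2⟩
  have hcb : sSup S = b := by
    by_contra hne
    have hcb : sSup S < b := hc.2.lt_of_ne hne
    obtain ⟨c', hc', hc'S⟩ := hcS.exists_gt hη hcb (hα.1 _ ⟨hc.1, hcb⟩)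
    exact (le_csSup hbdd ⟨⟨hc.1.trans hc'.1.le, hc'.2⟩, hc'S⟩).not_gt hc'.1
  obtain ⟨g, hg, happrox, -⟩ := hcS
  exact ⟨g, hg, hcb ▸ happrox⟩

end StepApproximation

def HasLeftLimitsOn {E : Type*} [TopologicalSpace E] (f : ℝ → E) (s : Set ℝ) : Prop :=
  ∀ u ∈ s, Tendsto f (𝓝[<] u) (𝓝 (leftLim f u))

lemma sum_edist_leftLim_le_eVariationOn {E : Type*} [PseudoEMetricSpace E] {f : ℝ → E}
    {a b : ℝ} (hf : HasLeftLimitsOn f (Ioc a b)) (F : Finset ℝ) (hF : ↑F ⊆ Ioc a b) :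
    ∑ u ∈ F, edist (f u) (leftLim f u) ≤ eVariationOn f (Icc a b) := by
  classical
  induction F using Finset.induction_on_max generalizing b with
  | empty => simp
  | insert w F hlt ih =>
    have hw : w ∈ Ioc a b := hF (Finset.mem_insert_self w F)
    set m := (insert a F).max' (Finset.insert_nonempty a F)
    have hmw : m < w := (Finset.max'_lt_iff _ _).2 fun x hx =>
      (Finset.mem_insert.1 hx).elim (· ▸ hw.1) (hlt x)
    have hFm : ↑F ⊆ Ioc a m := fun x hx =>
      ⟨(hF (Finset.mem_insert_of_mem hx)).1, (insert a F).le_max' x (Finset.mem_insert_of_mem hx)⟩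
    have hIco : Icc a w ∩ Iio w = Ico a w := by grind
    have hsplit := eVariationOn.eVariationOn_on_inter_Iic_eq_Iio_add_edist (s := Icc a w)
      (hIco ▸ right_nhdsWithin_Ico_neBot hw.1) (right_mem_Icc.2 hw.1.le)
      ((hf w hw).mono_left (nhdsWithin_mono _ inter_subset_right))
    -- The variation on `[a, w]` is that on `[a, w)` plus the jump at `w`, and `[a, m] ⊆ [a, w)`.
    rw [Finset.sum_insert fun h => (hlt w h).false, add_comm]
    calc ∑ u ∈ F, edist (f u) (leftLim f u) + edist (f w) (leftLim f w)
        ≤ eVariationOn f (Icc a m) + edist (f w) (leftLim f w) :=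
          add_le_add_left (ih (fun u hu => hf u ⟨hu.1, hu.2.trans (hmw.le.trans hw.2)⟩) hFm) _
      _ ≤ eVariationOn f (Icc a w ∩ Iio w) + edist (f w) (leftLim f w) := by
          gcongr
          exact eVariationOn.mono f fun x hx => ⟨⟨hx.1, hx.2.trans hmw.le⟩, hx.2.trans_lt hmw⟩
      _ = eVariationOn f (Icc a w) := by rw [← hsplit, inter_eq_left.2 Icc_subset_Iic_self]
      _ ≤ eVariationOn f (Icc a b) := eVariationOn.mono f (Icc_subset_Icc_right hw.2)

section RealValued

variable {f : ℝ → ℝ} {a b C : ℝ} {T : Set ℝ}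

lemma sum_abs_jump_le (hC : 0 ≤ C) (hf : HasLeftLimitsOn f (Ioc a b))
    (hvar : eVariationOn f (Icc a b) ≤ ENNReal.ofReal C) (hT : T ⊆ Ioc a b) (G : Finset T) :
    ∑ u ∈ G, |jump f u| ≤ C := by
  rw [← ENNReal.ofReal_le_ofReal_iff hC, ENNReal.ofReal_sum_of_nonneg fun _ _ => abs_nonneg _]
  refine le_trans (le_of_eq ?_) ((sum_edist_leftLim_le_eVariationOn hf (G.map (Embedding.subtype _))
    fun x hx => ?_).trans hvar)
  · simp [jump, edist_dist, Real.dist_eq]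
  · obtain ⟨u, -, rfl⟩ := Finset.mem_map.1 hx
    exact hT u.2

lemma summable_abs_jump (hC : 0 ≤ C) (hf : HasLeftLimitsOn f (Ioc a b))
    (hvar : eVariationOn f (Icc a b) ≤ ENNReal.ofReal C) (hT : T ⊆ Ioc a b) :
    Summable fun u : T => |jump f u| :=
  summable_of_sum_le (fun _ => abs_nonneg _) (sum_abs_jump_le hC hf hvar hT)

lemma tsum_abs_jump_le (hC : 0 ≤ C) (hf : HasLeftLimitsOn f (Ioc a b))
    (hvar : eVariationOn f (Icc a b) ≤ ENNReal.ofReal C) (hT : T ⊆ Ioc a b) :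
    ∑' u : T, |jump f u| ≤ C :=
  (summable_abs_jump hC hf hvar hT).tsum_le_of_sum_le (sum_abs_jump_le hC hf hvar hT)

lemma abs_jump_sub_jump_le {g : ℝ → ℝ} {u d : ℝ} (hu : u ∈ Ioc a b)
    (hf : HasLeftLimitsOn f (Ioc a b)) (hg : HasLeftLimitsOn g (Ioc a b))
    (hd : ∀ x ∈ Icc a b, |f x - g x| ≤ d) :
    |jump f u - jump g u| ≤ 2 * d := by
  have hlim : |leftLim f u - leftLim g u| ≤ d := by
    refine le_of_tendsto ((hf u hu).sub (hg u hu)).abs ?_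
    filter_upwards [Ioo_mem_nhdsLT hu.1] with x hx
    exact hd x ⟨hx.1.le, hx.2.le.trans hu.2⟩
  calc |jump f u - jump g u| = |(f u - g u) - (leftLim f u - leftLim g u)| := by
        rw [jump, jump]; ring_nf
    _ ≤ |f u - g u| + |leftLim f u - leftLim g u| := abs_sub _ _
    _ ≤ 2 * d := by linarith [hd u ⟨hu.1.le, hu.2⟩]

end RealValued

lemma le_one_of_forall_le_one_add {ι : Type*} [Infinite ι] {x : ι → ℝ} (hx : Summable x)
    {c : ℝ} (h : ∀ i, c ≤ 1 + x i) : c ≤ 1 := by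
  refine le_of_forall_pos_lt_add fun δ hδ => ?_
  obtain ⟨i, hi⟩ := (hx.tendsto_cofinite_zero.eventually (Iio_mem_nhds hδ)).exists
  linarith [h i, show x i < δ from hi]

section Ratio

variable {K : ℝ}

lemma one_add_pos_of_inv_le (hK : 0 < K) {x : ℝ} (hx : 1 / K ≤ 1 + x) : 0 < 1 + x :=
  (one_div_pos.2 hK).trans_le hx

lemma inv_one_add_le (hK : 0 < K) {x : ℝ} (hx : 1 / K ≤ 1 + x) : (1 + x)⁻¹ ≤ K := by
  simpa using inv_anti₀ (one_div_pos.2 hK) hx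

lemma abs_div_one_add_le (hK : 0 < K) {x : ℝ} (hx : 1 / K ≤ 1 + x) (z : ℝ) :
    |z / (1 + x)| ≤ K * |z| := by
  rw [abs_div, abs_of_pos (one_add_pos_of_inv_le hK hx), div_eq_mul_inv, mul_comm]
  exact mul_le_mul_of_nonneg_right (inv_one_add_le hK hx) (abs_nonneg z)

lemma abs_mul_div_one_add_sub_le (hK : 0 < K) {x y p q r : ℝ} (hx : 1 / K ≤ 1 + x)
    (hy : 1 / K ≤ 1 + y) :
    |x * p / (1 + x) - y * q / (1 + y)| ≤
      K * (|x| * |p - r|) + K ^ 2 * (|r| * |x - y|) + K * (|y| * |r - q|) := by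
  have h1x := one_add_pos_of_inv_le hK hx
  have h1y := one_add_pos_of_inv_le hK hy
  have hsplit : x * p / (1 + x) - y * q / (1 + y) =
      x * (p - r) / (1 + x) + r * (x - y) / (1 + x) / (1 + y) + y * (r - q) / (1 + y) := by
    field_simp
    ring
  have hmid : |r * (x - y) / (1 + x) / (1 + y)| ≤ K ^ 2 * (|r| * |x - y|) := by
    calc _ ≤ K * |r * (x - y) / (1 + x)| := abs_div_one_add_le hK hy _
      _ ≤ K * (K * |r * (x - y)|) := by gcongr; exact abs_div_one_add_le hK hx _
      _ = _ := by rw [abs_mul]; ring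
  rw [hsplit]
  refine (abs_add_three _ _ _).trans (add_le_add_three ?_ hmid ?_)
  · simpa only [abs_mul] using abs_div_one_add_le hK hx (x * (p - r))
  · simpa only [abs_mul] using abs_div_one_add_le hK hy (y * (r - q))

end Ratio

section TsumRatio

variable {ι : Type*} {K : ℝ} {x y p q r : ι → ℝ}

lemma summable_mul_div_one_add {d : ℝ} (hK : 0 < K) (hx : ∀ i, 1 / K ≤ 1 + x i)
    (hxs : Summable fun i => |x i|) (hrs : Summable fun i => |r i|)
    (hpr : ∀ i, |p i - r i| ≤ d) : Summable fun i => x i * p i / (1 + x i) := by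
  refine .of_norm_bounded ((hxs.mul_left (K * d)).add (hrs.mul_left (K * ∑' j, |x j|)))
    fun i => ?_
  have hxi : |x i| ≤ ∑' j, |x j| := hxs.le_tsum i fun j _ => abs_nonneg _
  have hpi : |p i| ≤ d + |r i| := by
    linarith [hpr i, abs_sub_abs_le_abs_sub (p i) (r i)]
  calc ‖x i * p i / (1 + x i)‖ ≤ K * (|x i| * |p i|) := by
        rw [Real.norm_eq_abs, ← abs_mul]; exact abs_div_one_add_le hK (hx i) _
    _ ≤ K * (|x i| * (d + |r i|)) := by gcongr
    _ = K * d * |x i| + K * |x i| * |r i| := by ring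
    _ ≤ K * d * |x i| + K * (∑' j, |x j|) * |r i| := by gcongr

lemma abs_tsum_mul_div_one_add_sub_le {X Y R d₁ d₂ d₃ : ℝ} (hK : 0 < K)
    (hx : ∀ i, 1 / K ≤ 1 + x i) (hy : ∀ i, 1 / K ≤ 1 + y i)
    (hxs : Summable fun i => |x i|) (hys : Summable fun i => |y i|)
    (hrs : Summable fun i => |r i|)
    (hX : ∑' i, |x i| ≤ X) (hY : ∑' i, |y i| ≤ Y) (hR : ∑' i, |r i| ≤ R)
    (hd₁ : 0 ≤ d₁) (hd₂ : 0 ≤ d₂) (hd₃ : 0 ≤ d₃)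
    (hpr : ∀ i, |p i - r i| ≤ d₁) (hrq : ∀ i, |r i - q i| ≤ d₂) (hxy : ∀ i, |x i - y i| ≤ d₃) :
    |∑' i, x i * p i / (1 + x i) - ∑' i, y i * q i / (1 + y i)| ≤
      K * X * d₁ + K ^ 2 * R * d₃ + K * Y * d₂ := by
  have hf := summable_mul_div_one_add hK hx hxs hrs hpr
  have hg := summable_mul_div_one_add hK hy hys hrs fun i => (abs_sub_comm _ _).trans_le (hrq i)
  have hxs' := (hxs.mul_right d₁).mul_left K
  have hrs' := (hrs.mul_right d₃).mul_left (K ^ 2)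
  have hys' := (hys.mul_right d₂).mul_left K
  calc |∑' i, x i * p i / (1 + x i) - ∑' i, y i * q i / (1 + y i)|
      = ‖∑' i, (x i * p i / (1 + x i) - y i * q i / (1 + y i))‖ := by
        rw [hf.tsum_sub hg, Real.norm_eq_abs]
    _ ≤ ∑' i, ‖x i * p i / (1 + x i) - y i * q i / (1 + y i)‖ :=
        norm_tsum_le_tsum_norm (hf.sub hg).norm
    _ ≤ ∑' i, (K * (|x i| * d₁) + K ^ 2 * (|r i| * d₃) + K * (|y i| * d₂)) := by
        refine (hf.sub hg).norm.tsum_le_tsum (fun i => ?_) ((hxs'.add hrs').add hys')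
        refine (abs_mul_div_one_add_sub_le hK (hx i) (hy i) (r := r i)).trans ?_
        gcongr
        exacts [hpr i, hxy i, hrq i]
    _ = K * ((∑' i, |x i|) * d₁) + K ^ 2 * ((∑' i, |r i|) * d₃) + K * ((∑' i, |y i|) * d₂) := by
        rw [(hxs'.add hrs').tsum_add hys', hxs'.tsum_add hrs', tsum_mul_left, tsum_mul_left,
          tsum_mul_left, tsum_mul_right, tsum_mul_right, tsum_mul_right]
    _ ≤ K * (X * d₁) + K ^ 2 * (R * d₃) + K * (Y * d₂) := by gcongr
    _ = _ := by ring

end TsumRatio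

lemma abs_jumpSum_sub_jumpSum_le {A₁ A₂ α₁ α₂ g : ℝ → ℝ} {a b s K M d₁ d₂ d₃ : ℝ}
    (hab : a ≤ b) (hs : s ≤ b) (hK : 0 < K) (hM : 0 ≤ M)
    (hA₁ : HasLeftLimitsOn A₁ (Ioc a b)) (hA₂ : HasLeftLimitsOn A₂ (Ioc a b))
    (hα₁ : HasLeftLimitsOn α₁ (Ioc a b)) (hα₂ : HasLeftLimitsOn α₂ (Ioc a b))
    (hg : BoundedVariationOn g univ)
    (hA₁var : eVariationOn A₁ (Icc a b) ≤ ENNReal.ofReal M)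
    (hA₂var : eVariationOn A₂ (Icc a b) ≤ ENNReal.ofReal M)
    (hA₁jump : ∀ u ∈ Ioc a b, 1 / K ≤ 1 + jump A₁ u)
    (hA₂jump : ∀ u ∈ Ioc a b, 1 / K ≤ 1 + jump A₂ u)
    (hα₁g : ∀ x ∈ Icc a b, |α₁ x - g x| ≤ d₁) (hgα₂ : ∀ x ∈ Icc a b, |g x - α₂ x| ≤ d₂)
    (hA : ∀ x ∈ Icc a b, |A₁ x - A₂ x| ≤ d₃) :
    |jumpSum A₁ α₁ a s - jumpSum A₂ α₂ a s| ≤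
      K * M * (2 * d₁) + K ^ 2 * (eVariationOn g (Icc a b)).toReal * (2 * d₃) +
        K * M * (2 * d₂) := by
  have hT : Ioc a s ⊆ Ioc a b := Ioc_subset_Ioc_right hs
  have hgl : HasLeftLimitsOn g (Ioc a b) := fun u _ => hg.tendsto_leftLim u
  have hgvar : eVariationOn g (Icc a b) ≤ ENNReal.ofReal (eVariationOn g (Icc a b)).toReal :=
    (ENNReal.ofReal_toReal (hg.mono (subset_univ _))).ge
  have hb : b ∈ Icc a b := right_mem_Icc.2 hab
  exact abs_tsum_mul_div_one_add_sub_le hK (fun u => hA₁jump u (hT u.2))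
    (fun u => hA₂jump u (hT u.2)) (summable_abs_jump hM hA₁ hA₁var hT)
    (summable_abs_jump hM hA₂ hA₂var hT) (summable_abs_jump ENNReal.toReal_nonneg hgl hgvar hT)
    (tsum_abs_jump_le hM hA₁ hA₁var hT) (tsum_abs_jump_le hM hA₂ hA₂var hT)
    (tsum_abs_jump_le ENNReal.toReal_nonneg hgl hgvar hT)
    (by linarith [abs_nonneg (α₁ b - g b), hα₁g b hb])
    (by linarith [abs_nonneg (g b - α₂ b), hgα₂ b hb])
    (by linarith [abs_nonneg (A₁ b - A₂ b), hA b hb])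
    (fun u => abs_jump_sub_jump_le (hT u.2) hα₁ hgl hα₁g)
    (fun u => abs_jump_sub_jump_le (hT u.2) hgl hα₂ hgα₂)
    (fun u => abs_jump_sub_jump_le (hT u.2) hA₁ hA₂ hA)

lemma mul_le_sq_mul_max_sq_one {K M : ℝ} (hK : 1 ≤ K) (hM : 0 ≤ M) :
    K * M ≤ K ^ 2 * max (M ^ 2) 1 := by
  have hMmax : M ≤ max (M ^ 2) 1 := by
    rcases le_total M 1 with h | h
    · exact le_max_of_le_right h
    · exact le_max_of_le_left (by nlinarith)
  rw [sq, mul_assoc]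
  exact mul_le_mul_of_nonneg_left (hMmax.trans (le_mul_of_one_le_left (by positivity) hK))
    (by linarith)

/-- Continuity of the product-integral derivative in the base point: the jump-sum
estimate with an approximating finite-variation function `α̃`. -/
theorem jumpSum_estimate
    (a b M K : ℝ) (hab : a < b) (hM : 0 < M) (hK : 0 < K)
    (A α : ℝ → ℝ) (Aseq αseq : ℕ → ℝ → ℝ)
    (hAc : IsCadlagOn a b A) (hAnc : ∀ n, IsCadlagOn a b (Aseq n))
    (hαc : IsCadlagOn a b α) (hαnc : ∀ n, IsCadlagOn a b (αseq n))
    (hABV : eVariationOn A (Set.Icc a b) ≤ ENNReal.ofReal M)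
    (hAnBV : ∀ n, eVariationOn (Aseq n) (Set.Icc a b) ≤ ENNReal.ofReal M)
    (hAjump : ∀ u ∈ Set.Ioc a b, 1 / K ≤ 1 + jump A u)
    (hAnjump : ∀ n, ∀ u ∈ Set.Ioc a b, 1 / K ≤ 1 + jump (Aseq n) u)
    (hαconv : TendstoUniformlyOn αseq α atTop (Set.Icc a b))
    (hAconv : TendstoUniformlyOn Aseq A atTop (Set.Icc a b)) :
    ∀ ε > (0:ℝ), ∃ αt : ℝ → ℝ,
      BoundedVariationOn αt (Set.Icc a b) ∧
      (∀ x ∈ Set.Icc a b, |α x - αt x| < ε) ∧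
      Filter.limsup
          (fun n => ⨆ s : Set.Ioc a b, |jumpSum (Aseq n) (αseq n) a s - jumpSum A α a s|)
          atTop ≤
        K ^ 2 * (8 * max (M ^ 2) 1 + 2 * (eVariationOn αt (Set.Icc a b)).toReal) * ε := by
  intro ε hε
  obtain ⟨g, hg, hαg⟩ := hαc.exists_boundedVariationOn_abs_sub_le hab.le (half_pos hε)
  have hK1 : 1 ≤ K := by
    have : Infinite (Ioc a b) := (Ioc_infinite hab).to_subtype
    have h := le_one_of_forall_le_one_add (summable_abs_jump hM.le hAc.2 hABV subset_rfl).of_abs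
      fun u => hAjump u u.2
    rwa [div_le_one hK] at h
  refine ⟨g, hg.mono (subset_univ _), fun x hx => (hαg x hx).trans_lt (half_lt_self hε), ?_⟩
  have : Nonempty (Ioc a b) := ⟨⟨b, hab, le_rfl⟩⟩
  refine limsup_le_of_le (isCoboundedUnder_le_of_le atTop fun n =>
    Real.iSup_nonneg fun s => abs_nonneg _) ?_
  filter_upwards [Metric.tendstoUniformlyOn_iff.mp hαconv _ (half_pos hε),
    Metric.tendstoUniformlyOn_iff.mp hAconv _ (half_pos hε)] with n hαn hAn
  refine ciSup_le fun s => (abs_jumpSum_sub_jumpSum_le (d₁ := ε) hab.le s.2.2 hK hM.le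
    (hAnc n).2 hAc.2 (hαnc n).2 hαc.2 hg (hAnBV n) hABV (hAnjump n) hAjump
    (fun x hx => ?_) (fun x hx => (abs_sub_comm _ _).trans_le (hαg x hx))
    (fun x hx => (abs_sub_comm _ _).trans_le (hAn x hx).le)).trans ?_
  · have h := hαn x hx
    rw [Real.dist_eq, abs_sub_comm] at h
    linarith [abs_sub_le (αseq n x) (α x) (g x), hαg x hx]
  · have hV : 0 ≤ K ^ 2 * (eVariationOn g (Icc a b)).toReal := by positivity
    nlinarith [mul_le_mul_of_nonneg_right (mul_le_sq_mul_max_sq_one hK1 hM.le) hε.le,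
      mul_nonneg hV hε.le, mul_pos (mul_pos hK hM) hε]
end

section
/- Counterexample to uniform Hadamard differentiability of the quantile (inverse) map: define A(x) = x on [0,2]; Aₙ(x) = x − 1/√n for x ≤ 1 − 1/√n, Aₙ(x) = 2x − 1 for 1 − 1/√n < x < 1 + 1/√n, and Aₙ(x) = x + 1/√n for x ≥ 1 + 1/√n; let αₙ = α ≡ 1, p = 1, tₙ = 1/√n. Then: (i) ‖Aₙ − A‖_∞ → 0; (ii) for every n ≥ 1, (Aₙ + tₙ αₙ)(1 − tₙ/2) = 1 and Aₙ(1) = 1, so with Φ_p(Aₙ + tₙ αₙ) = 1 − tₙ/2 and Φ_p(Aₙ) = 1 one has (Φ_p(Aₙ + tₙ αₙ) − Φ_p(Aₙ))/tₙ = −1/2; (iii) the Hadamard derivative value −α(Φ_p(A))/A'(Φ_p(A)) equals −1. Hence −1/2 ≠ −1 and the inverse map fails to be uniformly Hadamard differentiable at A tangentially to the constant function 1. -/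
open Filter Topology

/-! Aₙ is the identity shifted by ∓tₙ outside the window |x − 1| < tₙ, on which it has slope 2.
Hence Aₙ → id uniformly, while the level-1 points of Aₙ and Aₙ + tₙ are 1 and 1 − tₙ/2, both in
the window: the quantile moves at rate 1/2 = 1/Aₙ'(1) instead of 1/A'(1) = 1. -/

/-- The sequence `Aₙ` of the counterexample to uniform Hadamard differentiability
of the inverse (quantile) map. -/
noncomputable def Aseq (n : ℕ) (x : ℝ) : ℝ :=
  if x ≤ 1 - 1 / Real.sqrt n then x - 1 / Real.sqrt n
  else if x < 1 + 1 / Real.sqrt n then 2 * x - 1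
  else x + 1 / Real.sqrt n

theorem abs_Aseq_sub_le (n : ℕ) (x : ℝ) : |Aseq n x - x| ≤ 1 / Real.sqrt n := by
  have hs : 0 ≤ 1 / Real.sqrt n := by positivity
  unfold Aseq
  split_ifs with hlow hhigh
  · rw [sub_sub_cancel_left, abs_neg, abs_of_nonneg hs]
  · rw [abs_le]; constructor <;> linarith
  · rw [add_sub_cancel_left, abs_of_nonneg hs]

theorem Aseq_of_abs_sub_one_lt {n : ℕ} {x : ℝ} (h : |x - 1| < 1 / Real.sqrt n) :
    Aseq n x = 2 * x - 1 := by
  rw [abs_lt] at h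
  rw [Aseq, if_neg (by linarith), if_pos (by linarith)]

theorem Aseq_one {n : ℕ} (hn : 0 < n) : Aseq n 1 = 1 := by
  rw [Aseq_of_abs_sub_one_lt (by simp only [sub_self, abs_zero]; positivity)]
  norm_num

theorem Aseq_one_sub_half_add {n : ℕ} (hn : 0 < n) :
    Aseq n (1 - 1 / (2 * Real.sqrt n)) + 1 / Real.sqrt n = 1 := by
  have hs : 0 < 1 / Real.sqrt n := by positivity
  have hhalf : 1 / (2 * Real.sqrt n) = (1 / Real.sqrt n) / 2 := by ring
  rw [hhalf, Aseq_of_abs_sub_one_lt (by rw [abs_lt]; constructor <;> linarith)]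
  ring

theorem tendsto_one_div_sqrt_natCast_atTop :
    Tendsto (fun n : ℕ => 1 / Real.sqrt n) atTop (𝓝 0) := by
  simpa only [one_div, Function.comp_def] using
    tendsto_inv_atTop_zero.comp (Real.tendsto_sqrt_atTop.comp tendsto_natCast_atTop_atTop)

/-- Counterexample to uniform Hadamard differentiability of the inverse map:
with `A = id` on `[0,2]`, `αₙ = α ≡ 1`, `p = 1`, `tₙ = 1/√n`, one has
(i) `‖Aₙ − A‖_∞ = 1/√n → 0`; (ii) `(Aₙ + tₙ·1)(1 − tₙ/2) = 1` and `Aₙ(1) = 1`, so the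
difference quotient of the quantiles equals `−1/2`; (iii) the Hadamard derivative value
`−α(1)/A'(1) = −1`, and `−1/2 ≠ −1`. -/
theorem inverse_map_not_uniformHadamard :
    (∀ n : ℕ, 1 ≤ n → ∀ x ∈ Set.Icc (0:ℝ) 2, |Aseq n x - x| ≤ 1 / Real.sqrt n) ∧
    Tendsto (fun n : ℕ => 1 / Real.sqrt n) atTop (𝓝 0) ∧
    (∀ n : ℕ, 1 ≤ n →
      Aseq n (1 - 1 / (2 * Real.sqrt n)) + 1 / Real.sqrt n = 1 ∧
      Aseq n 1 = 1 ∧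
      ((1 - (1 / Real.sqrt n) / 2) - 1) / (1 / Real.sqrt n) = -(1/2)) ∧
    -(1:ℝ) / 1 = -1 ∧
    (-(1/2) : ℝ) ≠ -1 := by
  refine ⟨fun n _ x _ => abs_Aseq_sub_le n x, tendsto_one_div_sqrt_natCast_atTop,
    fun n hn => ⟨Aseq_one_sub_half_add hn, Aseq_one hn, ?_⟩, by norm_num, by norm_num⟩
  have ht : 1 / Real.sqrt n ≠ 0 := by positivity
  field_simp
  ring
end

section
/- Uniform Hadamard differentiability of the inverse map under an increment control condition (Lemma S.5): let Aₙ, A be nondecreasing càdlàg functions in the domain of Φ_p with A continuously differentiable at ξ_p := Φ_p(A) ∈ (a,b) with A'(ξ_p) > 0 and A(ξ_p) = p. Suppose √n ‖Aₙ − A‖_∞ ≤ M for some M > 0 and √n sup_{|x| ≤ K/√n} |Aₙ(ξ_p + x) − Aₙ(ξ_p) − A(ξ_p + x) + A(ξ_p)| → 0 for every K > 0. Then for every sequence αₙ → α in sup-norm with α bounded and continuous at ξ_p and Aₙ + n^{−1/2} αₙ in the domain of Φ_p, one has √n (Φ_p(Aₙ + n^{−1/2} αₙ) − Φ_p(Aₙ))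 → −α(ξ_p)/A'(ξ_p). -/
/-!
Rescale around `ξ_p` by `√n`: with `Tₙ = Aₙ + n^{-1/2} αₙ`, put
`φₙ(s) = √n (Aₙ(ξ_p + s/√n) - p)` and `ψₙ(s) = √n (Tₙ(ξ_p + s/√n) - p)`. Increment control and
differentiability of `A` at `ξ_p` give `φₙ(s) = βₙ + A'(ξ_p) s + o(1)` uniformly on compacts, with
`βₙ = √n (Aₙ(ξ_p) - p)` bounded by `M`; uniform convergence of `αₙ` and continuity of `α` at `ξ_p`
add `α(ξ_p)` to this expansion for `ψₙ`. A function that crosses level `0` at `u` and is uniformly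
close on compacts to `βₙ + c s` with `c > 0` must have `u = -βₙ/c + o(1)`. The crossing points of
`φₙ` and `ψₙ` are `√n (Φ_p(Aₙ) - ξ_p)` and `√n (Φ_p(Tₙ) - ξ_p)`, so their difference tends to
`-α(ξ_p)/A'(ξ_p)`.
-/

open Filter Topology Set Function Asymptotics

def IsLevelCrossing (S : Set ℝ) (f : ℝ → ℝ) (p t : ℝ) : Prop :=
  ∀ s ∈ S, (s < t → f s ≤ p) ∧ (t ≤ s → p ≤ f s)

section LevelCrossing

variable {f : ℝ → ℝ} {a b p t : ℝ}

lemma MonotoneOn.apply_le_of_leftLim_le {s : ℝ} (hf : MonotoneOn f (Icc a b))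
    (ht : t ∈ Ioc a b) (hs : s ∈ Icc a b) (hst : s < t) (hp : leftLim f t ≤ p) : f s ≤ p := by
  have hab : a ≤ b := hs.1.trans hs.2
  set g := IccExtend hab (fun z : Icc a b => f z)
  have hg : Monotone g := hf.monotone.IccExtend hab
  have hfg : g =ᶠ[𝓝[<] t] f := eventually_of_mem (Ioo_mem_nhdsLT ht.1) fun z hz =>
    IccExtend_of_mem hab _ ⟨hz.1.le, hz.2.le.trans ht.2⟩
  calc f s = g s := (IccExtend_of_mem hab (fun z : Icc a b => f z) hs).symm
    _ ≤ leftLim g t := hg.le_leftLim hst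
    _ = leftLim f t := (leftLim_eq_of_tendsto ((hg.tendsto_leftLim t).congr' hfg)).symm
    _ ≤ p := hp

lemma MonotoneOn.isLevelCrossing (hf : MonotoneOn f (Icc a b)) (ht : t ∈ Ioc a b)
    (hleft : leftLim f t ≤ p) (hright : p ≤ f t) : IsLevelCrossing (Icc a b) f p t :=
  fun _ hs => ⟨fun hst => hf.apply_le_of_leftLim_le ht hs hst hleft,
    fun hts => hright.trans (hf ⟨ht.1.le, ht.2⟩ hs hts)⟩

lemma IsLevelCrossing.rescale {S : Set ℝ} (h : IsLevelCrossing S f p t) {ξ τ : ℝ}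
    (hτ : 0 < τ) :
    IsLevelCrossing ((fun s => ξ + s / τ) ⁻¹' S) (fun s => τ * (f (ξ + s / τ) - p)) 0
      (τ * (t - ξ)) := by
  intro s hs
  have hlt : s < τ * (t - ξ) ↔ ξ + s / τ < t := by
    rw [← lt_sub_iff_add_lt', div_lt_iff₀ hτ, mul_comm]
  refine ⟨fun hst => ?_, fun hts => ?_⟩
  · exact mul_nonpos_of_nonneg_of_nonpos hτ.le (sub_nonpos.2 ((h _ hs).1 (hlt.1 hst)))
  · exact mul_nonneg hτ.le (sub_nonneg.2 ((h _ hs).2 (not_lt.1 (mt hlt.2 (not_lt.2 hts)))))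

end LevelCrossing

section Rescaling

variable {ι : Type*} {l : Filter ι} {τ : ι → ℝ} {ξ : ℝ}

lemma tendsto_add_div_prod_principal (hτ : Tendsto τ l atTop) (R : ℝ) :
    Tendsto (fun q : ι × ℝ => ξ + q.2 / τ q.1) (l ×ˢ 𝓟 (Icc (-R) R)) (𝓝 ξ) := by
  have hbdd : IsBoundedUnder (· ≤ ·) (l ×ˢ 𝓟 (Icc (-R) R)) fun q : ι × ℝ => ‖q.2‖ :=
    isBoundedUnder_of_eventually_le (a := R)
      (eventually_prod_principal_iff.2 (Eventually.of_forall fun _ _ hs => abs_le.2 hs))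
  simpa [div_eq_mul_inv] using tendsto_const_nhds.add
    (isBoundedUnder_le_mul_tendsto_zero hbdd (hτ.comp tendsto_fst).inv_tendsto_atTop)

lemma div_mem_Icc_neg_div {s R t : ℝ} (hs : s ∈ Icc (-R) R) (ht : 0 < t) :
    s / t ∈ Icc (-(R / t)) (R / t) :=
  ⟨by rw [← neg_div]; exact div_le_div_of_nonneg_right hs.1 ht.le,
    div_le_div_of_nonneg_right hs.2 ht.le⟩

lemma eventually_forall_add_mem {S : Set ℝ} (hS : S ∈ 𝓝 ξ) (hτ : Tendsto τ l atTop) (R : ℝ) :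
    ∀ᶠ i in l, ∀ u ∈ Icc (-(R / τ i)) (R / τ i), ξ + u ∈ S := by
  obtain ⟨δ, hδ, hball⟩ := Metric.mem_nhds_iff.1 hS
  filter_upwards [(tendsto_const_nhds.div_atTop hτ).eventually (gt_mem_nhds hδ)] with i hi u hu
  exact hball (by simpa [Real.dist_eq] using (abs_le.2 hu).trans_lt hi)

lemma eventually_isLevelCrossing_rescale {S : Set ℝ} {f : ι → ℝ → ℝ} {t : ι → ℝ} {p : ℝ}
    (hS : S ∈ 𝓝 ξ) (hτ : Tendsto τ l atTop) (hf : ∀ i, IsLevelCrossing S (f i) p (t i))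
    (R : ℝ) :
    ∀ᶠ i in l, IsLevelCrossing (Icc (-R) R) (fun s => τ i * (f i (ξ + s / τ i) - p)) 0
      (τ i * (t i - ξ)) := by
  filter_upwards [eventually_forall_add_mem hS hτ R, hτ.eventually_gt_atTop 0]
    with i hmem hpos s hs
  exact (hf i).rescale hpos s (hmem _ (div_mem_Icc_neg_div hs hpos))

lemma HasDerivAt.tendsto_rescale {f : ℝ → ℝ} {c : ℝ} (hf : HasDerivAt f c ξ)
    (hτ : Tendsto τ l atTop) (R : ℝ) :
    Tendsto (fun q : ι × ℝ => τ q.1 * (f (ξ + q.2 / τ q.1) - f ξ) - c * q.2)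
      (l ×ˢ 𝓟 (Icc (-R) R)) (𝓝 0) := by
  set L := l ×ˢ 𝓟 (Icc (-R) R)
  have hpos : ∀ᶠ q in L, τ q.1 ≠ 0 :=
    ((hτ.eventually_gt_atTop 0).prod_inl _).mono fun _ h => h.ne'
  have hbdd : (fun q : ι × ℝ => q.2) =O[L] fun _ => (1 : ℝ) :=
    (isBigO_one_iff ℝ).2 (isBoundedUnder_of_eventually_le (a := R)
      (eventually_prod_principal_iff.2 (Eventually.of_forall fun _ _ hs => abs_le.2 hs)))
  have ho := (isBigO_refl (fun q : ι × ℝ => τ q.1) L).mul_isLittleO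
    (hf.isLittleO.comp_tendsto (tendsto_add_div_prod_principal hτ R))
  refine (isLittleO_one_iff ℝ).1 ((ho.congr' ?_ ?_).trans_isBigO hbdd)
  · filter_upwards [hpos] with q hq
    simp only [comp_apply, add_sub_cancel_left, smul_eq_mul]
    field_simp
  · filter_upwards [hpos] with q hq
    simp only [comp_apply, add_sub_cancel_left]
    field_simp

lemma TendstoUniformlyOn.tendsto_comp_add_div {F : ι → ℝ → ℝ} {f : ℝ → ℝ} {S : Set ℝ}
    (hF : TendstoUniformlyOn F f l S) (hS : S ∈ 𝓝 ξ) (hf : ContinuousAt f ξ)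
    (hτ : Tendsto τ l atTop) (R : ℝ) :
    Tendsto (fun q : ι × ℝ => F q.1 (ξ + q.2 / τ q.1)) (l ×ˢ 𝓟 (Icc (-R) R)) (𝓝 (f ξ)) :=
  TendstoUniformlyOn.tendsto_comp (F := fun q : ι × ℝ => F q.1)
    (fun u hu => tendsto_fst.eventually (hF u hu)) hf.continuousWithinAt
    (tendsto_nhdsWithin_iff.2 ⟨tendsto_add_div_prod_principal hτ R,
      (tendsto_add_div_prod_principal hτ R).eventually hS⟩)

lemma tendsto_mul_of_tendsto_mul_iSup_abs {G : ι → ℝ → ℝ} {K : ℝ}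
    (hτ : ∀ᶠ i in l, 0 < τ i)
    (hbdd : ∀ᶠ i in l, BddAbove (range fun u : Icc (-(K / τ i)) (K / τ i) => |G i u|))
    (h : Tendsto (fun i => τ i * ⨆ u : Icc (-(K / τ i)) (K / τ i), |G i u|) l (𝓝 0)) :
    Tendsto (fun q : ι × ℝ => τ q.1 * G q.1 (q.2 / τ q.1)) (l ×ˢ 𝓟 (Icc (-K) K)) (𝓝 0) := by
  refine squeeze_zero_norm' ?_ (h.comp tendsto_fst)
  refine eventually_prod_principal_iff.2 ?_
  filter_upwards [hτ, hbdd] with i hpos hbddi s hs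
  rw [norm_mul, Real.norm_of_nonneg hpos.le, Real.norm_eq_abs]
  exact mul_le_mul_of_nonneg_left (le_ciSup hbddi ⟨_, div_mem_Icc_neg_div hs hpos⟩) hpos.le

end Rescaling

section AsymptoticallyLinear

variable {ι : Type*} {l : Filter ι} {φ : ι → ℝ → ℝ} {u β : ι → ℝ} {c B : ℝ}

lemma eventually_forall_abs_lt_of_tendsto_prod_principal {F : ι × ℝ → ℝ} {S : Set ℝ}
    (h : Tendsto F (l ×ˢ 𝓟 S) (𝓝 0)) {ε : ℝ} (hε : 0 < ε) :
    ∀ᶠ i in l, ∀ s ∈ S, |F (i, s)| < ε :=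
  eventually_prod_principal_iff.1 (by simpa using h.eventually (eventually_abs_sub_lt 0 hε))

lemma eventually_abs_le_of_isLevelCrossing (hc : 0 < c)
    (hcross : ∀ R, ∀ᶠ i in l, IsLevelCrossing (Icc (-R) R) (φ i) 0 (u i))
    (happrox : ∀ R, Tendsto (fun q : ι × ℝ => φ q.1 q.2 - β q.1 - c * q.2)
      (l ×ˢ 𝓟 (Icc (-R) R)) (𝓝 0))
    (hβ : ∀ᶠ i in l, |β i| ≤ B) : ∃ R, ∀ᶠ i in l, |u i| ≤ R := by
  set R := (|B| + 1) / c
  have hcR : c * R = |B| + 1 := mul_div_cancel₀ _ hc.ne'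
  have hR : 0 ≤ R := by positivity
  refine ⟨R, ?_⟩
  filter_upwards [hcross R, eventually_forall_abs_lt_of_tendsto_prod_principal (happrox R)
    one_half_pos, hβ] with i hcr hap hβi
  have hβB := abs_le.1 (hβi.trans (le_abs_self B))
  rw [abs_le]
  constructor
  · by_contra! hu
    have hφ := (hcr (-R) ⟨le_rfl, by linarith⟩).2 hu.le
    have := (abs_lt.1 (hap (-R) ⟨le_rfl, by linarith⟩)).2
    linarith
  · by_contra! hu
    have hφ := (hcr R ⟨by linarith, le_rfl⟩).1 hu
    have := (abs_lt.1 (hap R ⟨by linarith, le_rfl⟩)).1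
    linarith

lemma tendsto_add_div_of_isLevelCrossing (hc : 0 < c)
    (hcross : ∀ R, ∀ᶠ i in l, IsLevelCrossing (Icc (-R) R) (φ i) 0 (u i))
    (happrox : ∀ R, Tendsto (fun q : ι × ℝ => φ q.1 q.2 - β q.1 - c * q.2)
      (l ×ˢ 𝓟 (Icc (-R) R)) (𝓝 0))
    (hβ : ∀ᶠ i in l, |β i| ≤ B) : Tendsto (fun i => u i + β i / c) l (𝓝 0) := by
  obtain ⟨R, hR⟩ := eventually_abs_le_of_isLevelCrossing hc hcross happrox hβ
  rw [Metric.tendsto_nhds]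
  intro ε hε
  obtain ⟨η, hη, hη1, hηε⟩ : ∃ η, 0 < η ∧ η ≤ 1 ∧ 2 * η ≤ ε :=
    ⟨min ε 1 / 2, by positivity, by linarith [min_le_right ε 1], by linarith [min_le_left ε 1]⟩
  have hcη : c * (2 * η) ≤ c * ε := mul_le_mul_of_nonneg_left hηε hc.le
  filter_upwards [hR, hcross (R + 1), eventually_forall_abs_lt_of_tendsto_prod_principal
    (happrox (R + 1)) (half_pos (mul_pos hc hη))] with i hu hcr hap
  obtain ⟨hu₁, hu₂⟩ := abs_le.1 hu
  have hmem : u i ∈ Icc (-(R + 1)) (R + 1) := ⟨by linarith, by linarith⟩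
  have hmem' : u i - η ∈ Icc (-(R + 1)) (R + 1) := ⟨by linarith, by linarith⟩
  have hleft := (hcr _ hmem').1 (by linarith)
  have hright := (hcr _ hmem).2 le_rfl
  have h₁ := abs_lt.1 (hap _ hmem')
  have h₂ := abs_lt.1 (hap _ hmem)
  have hdiv : u i + β i / c = (c * u i + β i) / c := by field_simp
  rw [Real.dist_eq, sub_zero, hdiv, abs_div, abs_of_pos hc, div_lt_iff₀ hc, abs_lt]
  constructor <;> nlinarith

end AsymptoticallyLinear

lemma tendsto_sqrt_natCast_atTop : Tendsto (fun n : ℕ => Real.sqrt n) atTop atTop :=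
  Real.tendsto_sqrt_atTop.comp tendsto_natCast_atTop_atTop

lemma tendsto_rescale_sub_of_incrementControl {A : ℝ → ℝ} {Aseq : ℕ → ℝ → ℝ} {a b c ξ M : ℝ}
    (hS : Icc a b ∈ 𝓝 ξ) (hA : HasDerivAt A c ξ)
    (hsup : ∀ n : ℕ, ∀ z ∈ Icc a b, Real.sqrt n * |Aseq n z - A z| ≤ M)
    (hincr : ∀ K > (0:ℝ),
      Tendsto (fun n : ℕ => Real.sqrt n *
        ⨆ u : Icc (-(K / Real.sqrt n)) (K / Real.sqrt n),
          |Aseq n (ξ + u) - Aseq n ξ - A (ξ + u) + A ξ|) atTop (𝓝 0))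
    (R : ℝ) :
    Tendsto (fun q : ℕ × ℝ => Real.sqrt q.1 * (Aseq q.1 (ξ + q.2 / Real.sqrt q.1) - A ξ)
        - Real.sqrt q.1 * (Aseq q.1 ξ - A ξ) - c * q.2)
      (atTop ×ˢ 𝓟 (Icc (-R) R)) (𝓝 0) := by
  have hτ := tendsto_sqrt_natCast_atTop
  set K := max R 1
  have hpos : ∀ᶠ n : ℕ in atTop, 0 < Real.sqrt n := hτ.eventually_gt_atTop 0
  have hclose : ∀ n : ℕ, 0 < Real.sqrt n → ∀ z ∈ Icc a b, |Aseq n z - A z| ≤ M / Real.sqrt n :=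
    fun n hn z hz => (le_div_iff₀' hn).2 (hsup n z hz)
  -- without this bound the `⨆` in `hincr` would be the junk value `0`
  have hbdd : ∀ᶠ n : ℕ in atTop,
      BddAbove (range fun u : Icc (-(K / Real.sqrt n)) (K / Real.sqrt n) =>
        |Aseq n (ξ + u) - Aseq n ξ - A (ξ + u) + A ξ|) := by
    filter_upwards [eventually_forall_add_mem hS hτ K, hpos] with n hmem hn
    refine ⟨M / Real.sqrt n + M / Real.sqrt n, ?_⟩
    rintro _ ⟨u, rfl⟩
    calc |Aseq n (ξ + u) - Aseq n ξ - A (ξ + u) + A ξ|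
        = |(Aseq n (ξ + u) - A (ξ + u)) - (Aseq n ξ - A ξ)| := by congr 1; ring
      _ ≤ |Aseq n (ξ + u) - A (ξ + u)| + |Aseq n ξ - A ξ| := abs_sub _ _
      _ ≤ M / Real.sqrt n + M / Real.sqrt n :=
        add_le_add (hclose n hn _ (hmem u u.2)) (hclose n hn ξ (mem_of_mem_nhds hS))
  have h := (tendsto_mul_of_tendsto_mul_iSup_abs
    (G := fun n u => Aseq n (ξ + u) - Aseq n ξ - A (ξ + u) + A ξ) hpos hbdd
    (hincr K (lt_max_of_lt_right one_pos))).add (hA.tendsto_rescale hτ K)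
  rw [add_zero] at h
  refine (h.mono_left (prod_mono le_rfl (principal_mono.2 ?_))).congr fun q => by ring
  exact Icc_subset_Icc (neg_le_neg (le_max_left _ _)) (le_max_left _ _)

lemma tendsto_rescale_sub_of_uniform_perturbation {Aseq αseq : ℕ → ℝ → ℝ} {α : ℝ → ℝ}
    {β : ℕ → ℝ} {S : Set ℝ} {c p ξ R : ℝ}
    (hA : Tendsto (fun q : ℕ × ℝ => Real.sqrt q.1 * (Aseq q.1 (ξ + q.2 / Real.sqrt q.1) - p)
        - β q.1 - c * q.2) (atTop ×ˢ 𝓟 (Icc (-R) R)) (𝓝 0))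
    (hα : TendstoUniformlyOn αseq α atTop S) (hS : S ∈ 𝓝 ξ) (hαξ : ContinuousAt α ξ) :
    Tendsto (fun q : ℕ × ℝ => Real.sqrt q.1 * (Aseq q.1 (ξ + q.2 / Real.sqrt q.1)
        + (Real.sqrt q.1)⁻¹ * αseq q.1 (ξ + q.2 / Real.sqrt q.1) - p) - (β q.1 + α ξ) - c * q.2)
      (atTop ×ˢ 𝓟 (Icc (-R) R)) (𝓝 0) := by
  have h := hA.add ((hα.tendsto_comp_add_div hS hαξ tendsto_sqrt_natCast_atTop R).sub_const (α ξ))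
  rw [sub_self, add_zero] at h
  refine h.congr' (((tendsto_sqrt_natCast_atTop.eventually_gt_atTop 0).prod_inl _).mono
    fun q hq => ?_)
  field_simp
  ring

theorem inverse_map_uniformHadamard_incrementControl_general
    (a b p M : ℝ) (ξp : ℝ) (hξp : ξp ∈ Set.Ioo a b)
    (A α : ℝ → ℝ) (Aseq αseq : ℕ → ℝ → ℝ) (x y : ℕ → ℝ)
    -- A, Aₙ are nondecreasing on [a,b]
    (hAnmono : ∀ n, MonotoneOn (Aseq n) (Set.Icc a b))
    -- Aₙ + n^{-1/2} αₙ is nondecreasing on [a,b] (lies in the domain of Φ_p)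
    (hAtnmono : ∀ n,
      MonotoneOn (fun z => Aseq n z + (Real.sqrt n)⁻¹ * αseq n z) (Set.Icc a b))
    -- A is continuously differentiable at ξ_p with positive derivative, A(ξ_p) = p
    (hdiff : ∃ U ∈ 𝓝 ξp, ∀ z ∈ U, DifferentiableAt ℝ A z)
    (hderivpos : 0 < deriv A ξp)
    (hAξ : A ξp = p)
    -- √n ‖Aₙ − A‖_∞ ≤ M
    (hsup : ∀ n : ℕ, ∀ z ∈ Set.Icc a b, Real.sqrt n * |Aseq n z - A z| ≤ M)
    -- increment control around ξ_p
    (hincr : ∀ K > (0:ℝ),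
      Tendsto (fun n : ℕ => Real.sqrt n *
        ⨆ u : Set.Icc (-(K / Real.sqrt n)) (K / Real.sqrt n),
          |Aseq n (ξp + u) - Aseq n ξp - A (ξp + u) + A ξp|) atTop (𝓝 0))
    -- α is bounded and continuous at ξ_p, αₙ → α in sup-norm
    (hαcont : ContinuousAt α ξp)
    (hαconv : TendstoUniformlyOn αseq α atTop (Set.Icc a b))
    -- x n = Φ_p(Aₙ) and y n = Φ_p(Aₙ + n^{-1/2} αₙ): quantile selections
    (hx : ∀ n, x n ∈ Set.Ioc a b ∧
      Function.leftLim (Aseq n) (x n) ≤ p ∧ p ≤ Aseq n (x n))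
    (hy : ∀ n, y n ∈ Set.Ioc a b ∧
      Function.leftLim (fun z => Aseq n z + (Real.sqrt n)⁻¹ * αseq n z) (y n) ≤ p ∧
      p ≤ Aseq n (y n) + (Real.sqrt n)⁻¹ * αseq n (y n)) :
    Tendsto (fun n : ℕ => Real.sqrt n * (y n - x n)) atTop
      (𝓝 (-(α ξp) / deriv A ξp)) := by
  subst hAξ
  obtain ⟨U, hU, hUdiff⟩ := hdiff
  have hA : HasDerivAt A (deriv A ξp) ξp := (hUdiff ξp (mem_of_mem_nhds hU)).hasDerivAt
  have hS : Icc a b ∈ 𝓝 ξp := Icc_mem_nhds hξp.1 hξp.2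
  have hβ (n : ℕ) : |Real.sqrt n * (Aseq n ξp - A ξp)| ≤ M := by
    rw [abs_mul, abs_of_nonneg (Real.sqrt_nonneg _)]
    exact hsup n ξp (Ioo_subset_Icc_self hξp)
  have happrox := tendsto_rescale_sub_of_incrementControl hS hA hsup hincr
  have hx' := tendsto_add_div_of_isLevelCrossing hderivpos
    (eventually_isLevelCrossing_rescale hS tendsto_sqrt_natCast_atTop fun n =>
      (hAnmono n).isLevelCrossing (hx n).1 (hx n).2.1 (hx n).2.2) happrox (.of_forall hβ)
  have hy' := tendsto_add_div_of_isLevelCrossing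
    (β := fun n : ℕ => Real.sqrt n * (Aseq n ξp - A ξp) + α ξp) hderivpos
    (eventually_isLevelCrossing_rescale hS tendsto_sqrt_natCast_atTop fun n =>
      (hAtnmono n).isLevelCrossing (hy n).1 (hy n).2.1 (hy n).2.2)
    (fun R => tendsto_rescale_sub_of_uniform_perturbation
      (β := fun n : ℕ => Real.sqrt n * (Aseq n ξp - A ξp)) (happrox R) hαconv hS hαcont)
    (.of_forall fun n => (abs_add_le _ _).trans (add_le_add (hβ n) le_rfl))
  have h := (hy'.sub hx').add_const (-(α ξp) / deriv A ξp)
  rw [sub_zero, zero_add] at h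
  refine h.congr fun n => ?_
  field_simp
  ring

/-- Uniform Hadamard differentiability of the inverse (quantile) map under an
increment control condition (Lemma S.5 of Ditzhaus et al.):
`√n (Φ_p(Aₙ + n^{−1/2} αₙ) − Φ_p(Aₙ)) → −α(ξ_p)/A'(ξ_p)`. -/
theorem inverse_map_uniformHadamard_incrementControl
    (a b p M : ℝ) (hM : 0 < M) (ξp : ℝ) (hξp : ξp ∈ Set.Ioo a b)
    (A α : ℝ → ℝ) (Aseq αseq : ℕ → ℝ → ℝ) (x y : ℕ → ℝ)
    -- A, Aₙ are nondecreasing on [a,b]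
    (hAmono : MonotoneOn A (Set.Icc a b))
    (hAnmono : ∀ n, MonotoneOn (Aseq n) (Set.Icc a b))
    -- Aₙ + n^{-1/2} αₙ is nondecreasing on [a,b] (lies in the domain of Φ_p)
    (hAtnmono : ∀ n,
      MonotoneOn (fun z => Aseq n z + (Real.sqrt n)⁻¹ * αseq n z) (Set.Icc a b))
    -- A is continuously differentiable at ξ_p with positive derivative, A(ξ_p) = p
    (hdiff : ∃ U ∈ 𝓝 ξp, ∀ z ∈ U, DifferentiableAt ℝ A z)
    (hderivcont : ContinuousAt (deriv A) ξp)
    (hderivpos : 0 < deriv A ξp)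
    (hAξ : A ξp = p)
    -- √n ‖Aₙ − A‖_∞ ≤ M
    (hsup : ∀ n : ℕ, ∀ z ∈ Set.Icc a b, Real.sqrt n * |Aseq n z - A z| ≤ M)
    -- increment control around ξ_p
    (hincr : ∀ K > (0:ℝ),
      Tendsto (fun n : ℕ => Real.sqrt n *
        ⨆ u : Set.Icc (-(K / Real.sqrt n)) (K / Real.sqrt n),
          |Aseq n (ξp + u) - Aseq n ξp - A (ξp + u) + A ξp|) atTop (𝓝 0))
    -- α is bounded and continuous at ξ_p, αₙ → α in sup-norm
    (hαbdd : ∃ C, ∀ z, |α z| ≤ C)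
    (hαcont : ContinuousAt α ξp)
    (hαconv : TendstoUniformlyOn αseq α atTop (Set.Icc a b))
    -- x n = Φ_p(Aₙ) and y n = Φ_p(Aₙ + n^{-1/2} αₙ): quantile selections
    (hx : ∀ n, x n ∈ Set.Ioc a b ∧
      Function.leftLim (Aseq n) (x n) ≤ p ∧ p ≤ Aseq n (x n))
    (hy : ∀ n, y n ∈ Set.Ioc a b ∧
      Function.leftLim (fun z => Aseq n z + (Real.sqrt n)⁻¹ * αseq n z) (y n) ≤ p ∧
      p ≤ Aseq n (y n) + (Real.sqrt n)⁻¹ * αseq n (y n)) :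
    Tendsto (fun n : ℕ => Real.sqrt n * (y n - x n)) atTop
      (𝓝 (-(α ξp) / deriv A ξp)) :=
  inverse_map_uniformHadamard_incrementControl_general a b p M ξp hξp A α Aseq αseq x y hAnmono
    hAtnmono hdiff hderivpos hAξ hsup hincr hαcont hαconv hx hy
end
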